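/- arXiv:2107.00960 — 2 statements merged into one kernel-verified Lean document; each statement's English description precedes it below -/
import Mathlib

section
/- Let (C_k)_{k≥1} be a sequence of smooth bivariate copulas and let c_{(n)} denote the s-vine densities. Then for every n ≥ 1 and all (u_1,…,u_n) ∈ (0,1)^n, ∫_0^1 c_{(n+1)}(u_1,…,u_n,x) dx = c_{(n)}(u_1,…,u_n), with the convention c_{(1)} ≡ 1. -/
open MeasureTheory Set

noncomputable section

/-- A smooth bivariate copula: `C : [0,1]² → [0,1]`, `C^∞` on `[0,1]²`, with the copula
boundary conditions and a strictly positive density `c = ∂²C/∂u∂v` on `(0,1)²`. -/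
structure SmoothBivCopula where
  toFun : ℝ → ℝ → ℝ
  smooth : ContDiffOn ℝ (⊤ : ℕ∞) (fun p : ℝ × ℝ => toFun p.1 p.2)
      (Set.Icc (0:ℝ) 1 ×ˢ Set.Icc (0:ℝ) 1)
  zero_left : ∀ v ∈ Set.Icc (0:ℝ) 1, toFun 0 v = 0
  zero_right : ∀ u ∈ Set.Icc (0:ℝ) 1, toFun u 0 = 0
  one_left : ∀ v ∈ Set.Icc (0:ℝ) 1, toFun 1 v = v
  one_right : ∀ u ∈ Set.Icc (0:ℝ) 1, toFun u 1 = u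
  density_pos : ∀ u ∈ Set.Ioo (0:ℝ) 1, ∀ v ∈ Set.Ioo (0:ℝ) 1,
    0 < deriv (fun t => deriv (fun s => toFun s t) u) v

namespace SmoothBivCopula

/-- `h⁽¹⁾(u,v) = ∂C(u,v)/∂u`. -/
def h1 (C : SmoothBivCopula) (u v : ℝ) : ℝ := deriv (fun s => C.toFun s v) u

/-- `h⁽²⁾(u,v) = ∂C(u,v)/∂v`. -/
def h2 (C : SmoothBivCopula) (u v : ℝ) : ℝ := deriv (fun t => C.toFun u t) v

/-- The copula density `c(u,v) = ∂²C/(∂u∂v)`. -/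
def density (C : SmoothBivCopula) (u v : ℝ) : ℝ :=
  deriv (fun t => deriv (fun s => C.toFun s t) u) v

end SmoothBivCopula

/-- The closed unit square. -/
def SQ : Set (ℝ × ℝ) := Set.Icc (0:ℝ) 1 ×ˢ Set.Icc (0:ℝ) 1

/-- The open unit square. -/
def UQ : Set (ℝ × ℝ) := Set.Ioo (0:ℝ) 1 ×ˢ Set.Ioo (0:ℝ) 1

lemma isOpen_UQ : IsOpen UQ := isOpen_Ioo.prod isOpen_Ioo

lemma UQ_subset_SQ : UQ ⊆ SQ :=
  Set.prod_mono Set.Ioo_subset_Icc_self Set.Ioo_subset_Icc_self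

lemma uniqueDiffOn_SQ : UniqueDiffOn ℝ SQ :=
  (uniqueDiffOn_Icc zero_lt_one).prod (uniqueDiffOn_Icc zero_lt_one)

lemma SQ_mem_nhds {p : ℝ × ℝ} (hp : p ∈ UQ) : SQ ∈ nhds p :=
  Filter.mem_of_superset (isOpen_UQ.mem_nhds hp) UQ_subset_SQ

namespace SmoothBivCopula

variable (C : SmoothBivCopula)

/-- The copula as a function on the product. -/
def F : ℝ × ℝ → ℝ := fun p => C.toFun p.1 p.2

lemma smoothF : ContDiffOn ℝ (⊤ : ℕ∞) C.F SQ := C.smooth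

lemma contDiffAt_F {p : ℝ × ℝ} (hp : p ∈ UQ) : ContDiffAt ℝ (⊤ : ℕ∞) C.F p :=
  C.smoothF.contDiffAt (SQ_mem_nhds hp)

lemma hasDerivAt_slice1 {a b : ℝ} (hp : (a, b) ∈ UQ) :
    HasDerivAt (fun s => C.toFun s b) (fderiv ℝ C.F (a, b) (1, 0)) a := by
  have h := (((C.contDiffAt_F hp).differentiableAt (by simp)).hasFDerivAt).comp_hasDerivAt a
    ((hasDerivAt_id' a).prodMk (hasDerivAt_const a b))
  exact h

lemma h1_eq_fderiv {a b : ℝ} (hp : (a, b) ∈ UQ) :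
    C.h1 a b = fderiv ℝ C.F (a, b) (1, 0) :=
  (C.hasDerivAt_slice1 hp).deriv

lemma hasDerivAt_slice2 {a b : ℝ} (hp : (a, b) ∈ UQ) :
    HasDerivAt (fun t => C.toFun a t) (fderiv ℝ C.F (a, b) (0, 1)) b :=
  (((C.contDiffAt_F hp).differentiableAt (by simp)).hasFDerivAt).comp_hasDerivAt b
    ((hasDerivAt_const b a).prodMk (hasDerivAt_id b))

lemma h2_eq_fderiv {a b : ℝ} (hp : (a, b) ∈ UQ) :
    C.h2 a b = fderiv ℝ C.F (a, b) (0, 1) :=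
  (C.hasDerivAt_slice2 hp).deriv

lemma hasDerivAt_h1_snd {a b : ℝ} (hp : (a, b) ∈ UQ) :
    HasDerivAt (fun v => C.h1 a v) (fderiv ℝ (fderiv ℝ C.F) (a, b) (0, 1) (1, 0)) b := by
  have hG : DifferentiableAt ℝ (fderiv ℝ C.F) (a, b) :=
    (((C.contDiffAt_F hp).fderiv_right (m := (⊤ : ℕ∞)) (by simp)).differentiableAt (by simp))
  have hcurve : HasDerivAt (fun v : ℝ => ((a : ℝ), v)) ((0 : ℝ), (1 : ℝ)) b :=
    (hasDerivAt_const b a).prodMk (hasDerivAt_id b)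
  have h1' : HasDerivAt (fun v => fderiv ℝ C.F (a, v))
      (fderiv ℝ (fderiv ℝ C.F) (a, b) (0, 1)) b :=
    hG.hasFDerivAt.comp_hasDerivAt b hcurve
  have h2' : HasDerivAt (fun v => fderiv ℝ C.F (a, v) ((1 : ℝ), (0 : ℝ)))
      (fderiv ℝ (fderiv ℝ C.F) (a, b) (0, 1) (1, 0)) b := by
    simpa using h1'.clm_apply (hasDerivAt_const b ((1 : ℝ), (0 : ℝ)))
  refine h2'.congr_of_eventuallyEq ?_
  filter_upwards [Ioo_mem_nhds hp.2.1 hp.2.2] with v hv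
  exact C.h1_eq_fderiv ⟨hp.1, hv⟩

lemma density_eq_fderiv2 {a b : ℝ} (hp : (a, b) ∈ UQ) :
    C.density a b = fderiv ℝ (fderiv ℝ C.F) (a, b) (0, 1) (1, 0) :=
  (C.hasDerivAt_h1_snd hp).deriv

lemma hasDerivAt_h1_density {a b : ℝ} (ha : a ∈ Set.Ioo (0:ℝ) 1) (hb : b ∈ Set.Ioo (0:ℝ) 1) :
    HasDerivAt (fun v => C.h1 a v) (C.density a b) b := by
  rw [C.density_eq_fderiv2 ⟨ha, hb⟩]
  exact C.hasDerivAt_h1_snd ⟨ha, hb⟩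

lemma hasDerivAt_h2_fst {a b : ℝ} (hp : (a, b) ∈ UQ) :
    HasDerivAt (fun u => C.h2 u b) (C.density a b) a := by
  have hG : DifferentiableAt ℝ (fderiv ℝ C.F) (a, b) :=
    (((C.contDiffAt_F hp).fderiv_right (m := (⊤ : ℕ∞)) (by simp)).differentiableAt (by simp))
  have hcurve : HasDerivAt (fun u : ℝ => (u, (b : ℝ))) ((1 : ℝ), (0 : ℝ)) a :=
    (hasDerivAt_id a).prodMk (hasDerivAt_const a b)
  have h1' : HasDerivAt (fun u => fderiv ℝ C.F (u, b))
      (fderiv ℝ (fderiv ℝ C.F) (a, b) (1, 0)) a :=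
    hG.hasFDerivAt.comp_hasDerivAt a hcurve
  have h2' : HasDerivAt (fun u => fderiv ℝ C.F (u, b) ((0 : ℝ), (1 : ℝ)))
      (fderiv ℝ (fderiv ℝ C.F) (a, b) (1, 0) (0, 1)) a := by
    simpa using h1'.clm_apply (hasDerivAt_const a ((0 : ℝ), (1 : ℝ)))
  have hsym : fderiv ℝ (fderiv ℝ C.F) (a, b) (1, 0) (0, 1)
      = fderiv ℝ (fderiv ℝ C.F) (a, b) (0, 1) (1, 0) :=
    (C.contDiffAt_F hp).isSymmSndFDerivAt (by simp; exact WithTop.coe_le_coe.2 le_top) _ _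
  rw [C.density_eq_fderiv2 hp, ← hsym]
  refine h2'.congr_of_eventuallyEq ?_
  filter_upwards [Ioo_mem_nhds hp.1.1 hp.1.2] with u hu
  exact C.h2_eq_fderiv ⟨hu, hp.2⟩

end SmoothBivCopula
namespace SmoothBivCopula

variable (C : SmoothBivCopula)

lemma h1_zero {a : ℝ} (ha : a ∈ Set.Ioo (0:ℝ) 1) : C.h1 a 0 = 0 := by
  have h : (fun s => C.toFun s 0) =ᶠ[nhds a] fun _ => (0:ℝ) := by
    filter_upwards [Ioo_mem_nhds ha.1 ha.2] with s hs
    exact C.zero_right s (Set.Ioo_subset_Icc_self hs)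
  rw [h1, h.deriv_eq, deriv_const]

lemma h1_one {a : ℝ} (ha : a ∈ Set.Ioo (0:ℝ) 1) : C.h1 a 1 = 1 := by
  have h : (fun s => C.toFun s 1) =ᶠ[nhds a] fun s => s := by
    filter_upwards [Ioo_mem_nhds ha.1 ha.2] with s hs
    exact C.one_right s (Set.Ioo_subset_Icc_self hs)
  rw [h1, h.deriv_eq, deriv_id'']

lemma fderivWithin_slice1_bot {a : ℝ} (ha : a ∈ Set.Ioo (0:ℝ) 1) :
    fderivWithin ℝ C.F SQ (a, 0) ((1:ℝ), (0:ℝ)) = 0 := by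
  have hmem : ((a:ℝ), (0:ℝ)) ∈ SQ :=
    ⟨Set.Ioo_subset_Icc_self ha, Set.left_mem_Icc.2 zero_le_one⟩
  have hdw : DifferentiableWithinAt ℝ C.F SQ (a, 0) :=
    (C.smoothF.differentiableOn (by simp)) _ hmem
  have hcurve : HasDerivWithinAt (fun s : ℝ => (s, (0:ℝ))) ((1:ℝ), (0:ℝ))
      (Set.Icc (0:ℝ) 1) a :=
    ((hasDerivAt_id a).prodMk (hasDerivAt_const a 0)).hasDerivWithinAt
  have hmaps : Set.MapsTo (fun s : ℝ => (s, (0:ℝ))) (Set.Icc (0:ℝ) 1) SQ :=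
    fun s hs => ⟨hs, Set.left_mem_Icc.2 zero_le_one⟩
  have hcomp : HasDerivWithinAt (C.F ∘ fun s : ℝ => (s, (0:ℝ)))
      (fderivWithin ℝ C.F SQ (a, 0) ((1:ℝ), (0:ℝ))) (Set.Icc (0:ℝ) 1) a :=
    hdw.hasFDerivWithinAt.comp_hasDerivWithinAt a hcurve hmaps
  have hzero : HasDerivWithinAt (fun _ : ℝ => (0:ℝ))
      (fderivWithin ℝ C.F SQ (a, 0) ((1:ℝ), (0:ℝ))) (Set.Icc (0:ℝ) 1) a := by
    refine hcomp.congr (fun s hs => ?_) ?_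
    · exact (C.zero_right s hs).symm
    · exact (C.zero_right a (Set.Ioo_subset_Icc_self ha)).symm
  have hu : UniqueDiffWithinAt ℝ (Set.Icc (0:ℝ) 1) a :=
    uniqueDiffOn_Icc zero_lt_one a (Set.Ioo_subset_Icc_self ha)
  have h1 := hzero.derivWithin hu
  have h2 := ((hasDerivAt_const a (0:ℝ)).hasDerivWithinAt
    (s := Set.Icc (0:ℝ) 1)).derivWithin hu
  exact h1.symm.trans h2

lemma fderivWithin_slice1_top {a : ℝ} (ha : a ∈ Set.Ioo (0:ℝ) 1) :
    fderivWithin ℝ C.F SQ (a, 1) ((1:ℝ), (0:ℝ)) = 1 := by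
  have hmem : ((a:ℝ), (1:ℝ)) ∈ SQ :=
    ⟨Set.Ioo_subset_Icc_self ha, Set.right_mem_Icc.2 zero_le_one⟩
  have hdw : DifferentiableWithinAt ℝ C.F SQ (a, 1) :=
    (C.smoothF.differentiableOn (by simp)) _ hmem
  have hcurve : HasDerivWithinAt (fun s : ℝ => (s, (1:ℝ))) ((1:ℝ), (0:ℝ))
      (Set.Icc (0:ℝ) 1) a :=
    ((hasDerivAt_id a).prodMk (hasDerivAt_const a 1)).hasDerivWithinAt
  have hmaps : Set.MapsTo (fun s : ℝ => (s, (1:ℝ))) (Set.Icc (0:ℝ) 1) SQ :=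
    fun s hs => ⟨hs, Set.right_mem_Icc.2 zero_le_one⟩
  have hcomp : HasDerivWithinAt (C.F ∘ fun s : ℝ => (s, (1:ℝ)))
      (fderivWithin ℝ C.F SQ (a, 1) ((1:ℝ), (0:ℝ))) (Set.Icc (0:ℝ) 1) a :=
    hdw.hasFDerivWithinAt.comp_hasDerivWithinAt a hcurve hmaps
  have hid : HasDerivWithinAt (fun s : ℝ => s)
      (fderivWithin ℝ C.F SQ (a, 1) ((1:ℝ), (0:ℝ))) (Set.Icc (0:ℝ) 1) a := by
    refine hcomp.congr (fun s hs => ?_) ?_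
    · exact (C.one_right s hs).symm
    · exact (C.one_right a (Set.Ioo_subset_Icc_self ha)).symm
  have hu : UniqueDiffWithinAt ℝ (Set.Icc (0:ℝ) 1) a :=
    uniqueDiffOn_Icc zero_lt_one a (Set.Ioo_subset_Icc_self ha)
  have h1 := hid.derivWithin hu
  have h2 := ((hasDerivAt_id' a).hasDerivWithinAt (s := Set.Icc (0:ℝ) 1)).derivWithin hu
  exact h1.symm.trans h2

lemma h1_continuousOn {a : ℝ} (ha : a ∈ Set.Ioo (0:ℝ) 1) :
    ContinuousOn (fun v => C.h1 a v) (Set.Icc (0:ℝ) 1) := by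
  have hφ : ContinuousOn (fun v => fderivWithin ℝ C.F SQ (a, v) ((1:ℝ), (0:ℝ)))
      (Set.Icc (0:ℝ) 1) := by
    have h0 : ContinuousOn (fderivWithin ℝ C.F SQ) SQ :=
      C.smoothF.continuousOn_fderivWithin uniqueDiffOn_SQ (by simp)
    have hmap : Set.MapsTo (fun v : ℝ => ((a:ℝ), v)) (Set.Icc (0:ℝ) 1) SQ :=
      fun v hv => ⟨Set.Ioo_subset_Icc_self ha, hv⟩
    have hc : ContinuousOn (fun v : ℝ => fderivWithin ℝ C.F SQ (a, v))
        (Set.Icc (0:ℝ) 1) :=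
      h0.comp ((continuous_const.prodMk continuous_id).continuousOn) hmap
    exact (ContinuousLinearMap.apply ℝ ℝ ((1:ℝ), (0:ℝ))).continuous.comp_continuousOn hc
  refine hφ.congr fun v hv => ?_
  beta_reduce
  rcases eq_or_lt_of_le hv.1 with h0 | h0
  · rw [← h0, C.h1_zero ha, C.fderivWithin_slice1_bot ha]
  rcases eq_or_lt_of_le hv.2 with h1 | h1
  · rw [h1, C.h1_one ha, C.fderivWithin_slice1_top ha]
  · rw [C.h1_eq_fderiv ⟨ha, h0, h1⟩, fderivWithin_of_mem_nhds (SQ_mem_nhds ⟨ha, h0, h1⟩)]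

lemma h1_strictMonoOn {a : ℝ} (ha : a ∈ Set.Ioo (0:ℝ) 1) :
    StrictMonoOn (fun v => C.h1 a v) (Set.Icc (0:ℝ) 1) := by
  apply strictMonoOn_of_deriv_pos (convex_Icc 0 1) (C.h1_continuousOn ha)
  intro y hy
  rw [interior_Icc] at hy
  rw [(C.hasDerivAt_h1_density ha hy).deriv]
  exact C.density_pos a ha y hy

lemma h1_mem_Ioo {a x : ℝ} (ha : a ∈ Set.Ioo (0:ℝ) 1) (hx : x ∈ Set.Ioo (0:ℝ) 1) :
    C.h1 a x ∈ Set.Ioo (0:ℝ) 1 := by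
  have hxI : x ∈ Set.Icc (0:ℝ) 1 := Set.Ioo_subset_Icc_self hx
  constructor
  · have := C.h1_strictMonoOn ha (Set.left_mem_Icc.2 zero_le_one) hxI hx.1
    simpa [C.h1_zero ha] using this
  · have := C.h1_strictMonoOn ha hxI (Set.right_mem_Icc.2 zero_le_one) hx.2
    simpa [C.h1_one ha] using this

/-- The flipped copula. -/
def flip : SmoothBivCopula where
  toFun u v := C.toFun v u
  smooth := by
    have hswap : ContDiff ℝ (⊤ : ℕ∞) (fun p : ℝ × ℝ => (p.2, p.1)) :=
      contDiff_snd.prodMk contDiff_fst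
    have : ContDiffOn ℝ (⊤ : ℕ∞) (C.F ∘ fun p : ℝ × ℝ => (p.2, p.1)) SQ :=
      C.smoothF.comp hswap.contDiffOn (fun p hp => ⟨hp.2, hp.1⟩)
    exact this
  zero_left v hv := C.zero_right v hv
  zero_right u hu := C.zero_left u hu
  one_left v hv := C.one_right v hv
  one_right u hu := C.one_left u hu
  density_pos u hu v hv := by
    have : HasDerivAt (fun t => C.h2 t u) (C.density v u) v := C.hasDerivAt_h2_fst ⟨hv, hu⟩
    have hd : deriv (fun t => deriv (fun s => C.toFun t s) u) v = C.density v u := this.deriv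
    calc (0:ℝ) < C.density v u := C.density_pos v hv u hu
    _ = _ := hd.symm

lemma flip_h1 (a b : ℝ) : C.flip.h1 a b = C.h2 b a := rfl

lemma h2_mem_Ioo {a b : ℝ} (ha : a ∈ Set.Ioo (0:ℝ) 1) (hb : b ∈ Set.Ioo (0:ℝ) 1) :
    C.h2 a b ∈ Set.Ioo (0:ℝ) 1 := by
  rw [← C.flip_h1 b a]
  exact C.flip.h1_mem_Ioo hb ha

/-- The within-set second derivative, a continuous surrogate for the density. -/
def Dw (a y : ℝ) : ℝ :=
  fderivWithin ℝ (fderivWithin ℝ C.F SQ) SQ (a, y) ((0:ℝ), (1:ℝ)) ((1:ℝ), (0:ℝ))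

lemma Dw_eq_density {a y : ℝ} (hp : (a, y) ∈ UQ) : C.Dw a y = C.density a y := by
  have h1 : fderivWithin ℝ C.F SQ =ᶠ[nhds (a, y)] fderiv ℝ C.F := by
    filter_upwards [isOpen_UQ.mem_nhds hp] with q hq
    exact fderivWithin_of_mem_nhds (SQ_mem_nhds hq)
  have h2 : fderivWithin ℝ (fderivWithin ℝ C.F SQ) SQ (a, y)
      = fderiv ℝ (fderivWithin ℝ C.F SQ) (a, y) :=
    fderivWithin_of_mem_nhds (SQ_mem_nhds hp)
  rw [Dw, h2, h1.fderiv_eq, ← C.density_eq_fderiv2 hp]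

lemma Dw_continuousOn {a : ℝ} (ha : a ∈ Set.Icc (0:ℝ) 1) :
    ContinuousOn (fun y => C.Dw a y) (Set.Icc (0:ℝ) 1) := by
  have h0 : ContinuousOn (fderivWithin ℝ (fderivWithin ℝ C.F SQ) SQ) SQ := by
    have h1 : ContDiffOn ℝ (⊤ : ℕ∞) (fderivWithin ℝ C.F SQ) SQ :=
      C.smoothF.fderivWithin uniqueDiffOn_SQ (by norm_cast)
    exact h1.continuousOn_fderivWithin uniqueDiffOn_SQ (by simp)
  have hmap : Set.MapsTo (fun y : ℝ => ((a:ℝ), y)) (Set.Icc (0:ℝ) 1) SQ :=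
    fun y hy => ⟨ha, hy⟩
  have hc : ContinuousOn (fun y : ℝ => fderivWithin ℝ (fderivWithin ℝ C.F SQ) SQ (a, y))
      (Set.Icc (0:ℝ) 1) :=
    h0.comp ((continuous_const.prodMk continuous_id).continuousOn) hmap
  exact (((ContinuousLinearMap.apply ℝ ℝ ((1:ℝ), (0:ℝ))).continuous).comp
    (ContinuousLinearMap.apply ℝ (ℝ × ℝ →L[ℝ] ℝ) ((0:ℝ), (1:ℝ))).continuous).comp_continuousOn hc

end SmoothBivCopula
/-- The pair of forward and backward Rosenblatt functions `(R⁽¹⁾_k, R⁽²⁾_k)` built from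
h-function sequences `h1 h2 : ℕ → ℝ → ℝ → ℝ` (index `k` corresponds to copula `C_k`). -/
def rosenblattPair (h1 h2 : ℕ → ℝ → ℝ → ℝ) :
    (k : ℕ) → ((Fin k → ℝ) → ℝ → ℝ) × ((Fin k → ℝ) → ℝ → ℝ)
  | 0 => (fun _ x => x, fun _ x => x)
  | k + 1 =>
    let P := rosenblattPair h1 h2 k
    (fun u x => h1 (k + 1) (P.2 (Fin.tail u) (u 0)) (P.1 (Fin.tail u) x),
     fun u x => h2 (k + 1) (P.2 (Fin.init u) x) (P.1 (Fin.init u) (u (Fin.last k))))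

/-- Forward Rosenblatt function `R⁽¹⁾_k` of the copula sequence `C`. -/
def R1 (C : ℕ → SmoothBivCopula) (k : ℕ) : (Fin k → ℝ) → ℝ → ℝ :=
  (rosenblattPair (fun j => (C j).h1) (fun j => (C j).h2) k).1

/-- Backward Rosenblatt function `R⁽²⁾_k` of the copula sequence `C`. -/
def R2 (C : ℕ → SmoothBivCopula) (k : ℕ) : (Fin k → ℝ) → ℝ → ℝ :=
  (rosenblattPair (fun j => (C j).h1) (fun j => (C j).h2) k).2

/-- `get u m` is the `(m+1)`-st (i.e. 0-indexed `m`-th) entry of `u`, with junk value `0`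
out of range. -/
def get {n : ℕ} (u : Fin n → ℝ) (m : ℕ) : ℝ := if h : m < n then u ⟨m, h⟩ else 0

/-- `seg u a len` is the length-`len` slice of `u` starting at 0-indexed position `a`. -/
def seg {n : ℕ} (u : Fin n → ℝ) (a len : ℕ) : Fin len → ℝ := fun i => get u (a + i)

/-- The s-vine density of order `n`:
`c_(n)(u₁,…,uₙ) = ∏_{k=1}^{n-1} ∏_{j=k+1}^{n} c_k(R⁽²⁾_{k-1}(u_{[j-k+1,j-1]}, u_{j-k}), R⁽¹⁾_{k-1}(u_{[j-k+1,j-1]}, u_j))`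
(1-indexed). -/
def svineDensity (C : ℕ → SmoothBivCopula) (n : ℕ) (u : Fin n → ℝ) : ℝ :=
  ∏ k ∈ Finset.Icc 1 (n - 1), ∏ j ∈ Finset.Icc (k + 1) n,
    (C k).density (R2 C (k - 1) (seg u (j - k) (k - 1)) (get u (j - k - 1)))
                  (R1 C (k - 1) (seg u (j - k) (k - 1)) (get u (j - 1)))

/-- The forward Rosenblatt density
`f_k(u,x) = ∏_{j=1}^{k} c_j(R⁽²⁾_{j-1}(u_{[k-j+2,k]}, u_{k-j+1}), R⁽¹⁾_{j-1}(u_{[k-j+2,k]}, x))`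
(1-indexed). -/
def fden (C : ℕ → SmoothBivCopula) (k : ℕ) (u : Fin k → ℝ) (x : ℝ) : ℝ :=
  ∏ j ∈ Finset.Icc 1 k,
    (C j).density (R2 C (j - 1) (seg u (k - j + 1) (j - 1)) (get u (k - j)))
                  (R1 C (j - 1) (seg u (k - j + 1) (j - 1)) x)

lemma get_lt {n : ℕ} (u : Fin n → ℝ) {m : ℕ} (h : m < n) : get u m = u ⟨m, h⟩ := dif_pos h

lemma get_tail {k : ℕ} (v : Fin (k + 1) → ℝ) (m : ℕ) :
    get (Fin.tail v) m = get v (m + 1) := by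
  unfold _root_.get
  by_cases h : m < k
  · rw [dif_pos h, dif_pos (by omega : m + 1 < k + 1)]
    rfl
  · rw [dif_neg h, dif_neg (by omega)]

lemma get_snoc_lt {n : ℕ} (u : Fin n → ℝ) (x : ℝ) {m : ℕ} (h : m < n) :
    get (Fin.snoc u x) m = get u m := by
  unfold _root_.get
  rw [dif_pos (by omega : m < n + 1), dif_pos h]
  have : (⟨m, by omega⟩ : Fin (n + 1)) = Fin.castSucc ⟨m, h⟩ := rfl
  rw [this, Fin.snoc_castSucc]

lemma get_snoc_last {n : ℕ} (u : Fin n → ℝ) (x : ℝ) : get (Fin.snoc u x) n = x := by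
  unfold _root_.get
  rw [dif_pos (by omega : n < n + 1)]
  have : (⟨n, by omega⟩ : Fin (n + 1)) = Fin.last n := rfl
  rw [this, Fin.snoc_last]

lemma seg_one_eq_tail {k : ℕ} (v : Fin (k + 1) → ℝ) : seg v 1 k = Fin.tail v := by
  funext i
  show get v (1 + i) = v i.succ
  rw [get_lt v (by omega : 1 + (i:ℕ) < k + 1)]
  congr 1
  ext
  simp [Nat.add_comm]

lemma seg_mem_Ioo {n : ℕ} (u : Fin n → ℝ) (hu : ∀ i, u i ∈ Set.Ioo (0:ℝ) 1)
    {a len : ℕ} (h : a + len ≤ n) : ∀ i, seg u a len i ∈ Set.Ioo (0:ℝ) 1 := by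
  intro i
  show get u (a + i) ∈ _
  rw [get_lt u (by omega : a + (i:ℕ) < n)]
  exact hu _

lemma R1_zero_def (C : ℕ → SmoothBivCopula) (v : Fin 0 → ℝ) (x : ℝ) : R1 C 0 v x = x := rfl

lemma R1_succ_def (C : ℕ → SmoothBivCopula) (k : ℕ) (v : Fin (k + 1) → ℝ) (x : ℝ) :
    R1 C (k + 1) v x
      = (C (k + 1)).h1 (R2 C k (Fin.tail v) (v 0)) (R1 C k (Fin.tail v) x) := rfl

lemma R2_succ_def (C : ℕ → SmoothBivCopula) (k : ℕ) (v : Fin (k + 1) → ℝ) (x : ℝ) :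
    R2 C (k + 1) v x
      = (C (k + 1)).h2 (R2 C k (Fin.init v) x) (R1 C k (Fin.init v) (v (Fin.last k))) := rfl

lemma fden_zero (C : ℕ → SmoothBivCopula) (v : Fin 0 → ℝ) (x : ℝ) : fden C 0 v x = 1 := by
  simp [fden]

lemma fden_succ (C : ℕ → SmoothBivCopula) (k : ℕ) (v : Fin (k + 1) → ℝ) (x : ℝ) :
    fden C (k + 1) v x = fden C k (Fin.tail v) x
      * (C (k + 1)).density (R2 C k (Fin.tail v) (v 0)) (R1 C k (Fin.tail v) x) := by
  unfold fden
  rw [Finset.prod_Icc_succ_top (by omega : 1 ≤ k + 1)]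
  congr 1
  · refine Finset.prod_congr rfl fun j hj => ?_
    simp only [Finset.mem_Icc] at hj
    have hseg : seg v (k + 1 - j + 1) (j - 1) = seg (Fin.tail v) (k - j + 1) (j - 1) := by
      funext i
      show get v _ = get (Fin.tail v) _
      rw [get_tail]
      congr 1
      omega
    have hget : get v (k + 1 - j) = get (Fin.tail v) (k - j) := by
      rw [get_tail]
      congr 1
      omega
    rw [hseg, hget]
  · have h1 : k + 1 - (k + 1) + 1 = 1 := by omega
    have h2 : k + 1 - 1 = k := by omega
    have h3 : k + 1 - (k + 1) = 0 := by omega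
    rw [h1, h2, h3, seg_one_eq_tail]
    rw [get_lt v (by omega : 0 < k + 1)]
    have h4 : (⟨0, by omega⟩ : Fin (k + 1)) = 0 := by ext; simp
    rw [h4]

lemma tail_mem {k : ℕ} (v : Fin (k + 1) → ℝ) (hv : ∀ i, v i ∈ Set.Ioo (0:ℝ) 1) :
    ∀ i, Fin.tail v i ∈ Set.Ioo (0:ℝ) 1 := fun i => hv i.succ

lemma init_mem {k : ℕ} (v : Fin (k + 1) → ℝ) (hv : ∀ i, v i ∈ Set.Ioo (0:ℝ) 1) :
    ∀ i, Fin.init v i ∈ Set.Ioo (0:ℝ) 1 := fun i => hv i.castSucc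

/-- Main inductive properties of the Rosenblatt functions. -/
lemma R_props (C : ℕ → SmoothBivCopula) :
    ∀ k (v : Fin k → ℝ), (∀ i, v i ∈ Set.Ioo (0:ℝ) 1) →
      (∀ x ∈ Set.Ioo (0:ℝ) 1, R1 C k v x ∈ Set.Ioo (0:ℝ) 1) ∧
      (∀ x ∈ Set.Ioo (0:ℝ) 1, R2 C k v x ∈ Set.Ioo (0:ℝ) 1) ∧
      ContinuousOn (R1 C k v) (Set.Icc (0:ℝ) 1) ∧
      R1 C k v 0 = 0 ∧ R1 C k v 1 = 1 ∧
      (∀ x ∈ Set.Ioo (0:ℝ) 1, HasDerivAt (R1 C k v) (fden C k v x) x) := by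
  intro k
  induction k with
  | zero =>
    intro v hv
    refine ⟨fun x hx => hx, fun x hx => hx, continuous_id.continuousOn, rfl, rfl, ?_⟩
    intro x hx
    rw [fden_zero]
    exact hasDerivAt_id x
  | succ k ih =>
    intro v hv
    obtain ⟨ih1, ih2, ihc, ih0, ihone, ihd⟩ := ih (Fin.tail v) (tail_mem v hv)
    obtain ⟨jh1, jh2, _, _, _, _⟩ := ih (Fin.init v) (init_mem v hv)
    have hA : R2 C k (Fin.tail v) (v 0) ∈ Set.Ioo (0:ℝ) 1 := ih2 (v 0) (hv 0)
    have hmapsIcc : Set.MapsTo (R1 C k (Fin.tail v)) (Set.Icc (0:ℝ) 1)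
        (Set.Icc (0:ℝ) 1) := by
      intro x hx
      rcases eq_or_lt_of_le hx.1 with h0 | h0
      · rw [← h0, ih0]; exact Set.left_mem_Icc.2 zero_le_one
      rcases eq_or_lt_of_le hx.2 with h1 | h1
      · rw [h1, ihone]; exact Set.right_mem_Icc.2 zero_le_one
      · exact Set.Ioo_subset_Icc_self (ih1 x ⟨h0, h1⟩)
    refine ⟨?_, ?_, ?_, ?_, ?_, ?_⟩
    · intro x hx
      rw [R1_succ_def]
      exact (C (k + 1)).h1_mem_Ioo hA (ih1 x hx)
    · intro x hx
      rw [R2_succ_def]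
      exact (C (k + 1)).h2_mem_Ioo (jh2 x hx) (jh1 _ (hv (Fin.last k)))
    · have : ContinuousOn (fun x => (C (k + 1)).h1 (R2 C k (Fin.tail v) (v 0))
          (R1 C k (Fin.tail v) x)) (Set.Icc (0:ℝ) 1) :=
        ((C (k + 1)).h1_continuousOn hA).comp ihc hmapsIcc
      exact this
    · rw [R1_succ_def, ih0]
      exact (C (k + 1)).h1_zero hA
    · rw [R1_succ_def, ihone]
      exact (C (k + 1)).h1_one hA
    · intro x hx
      have hy : R1 C k (Fin.tail v) x ∈ Set.Ioo (0:ℝ) 1 := ih1 x hx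
      have hcomp := ((C (k + 1)).hasDerivAt_h1_density hA hy).comp x (ihd x hx)
      rw [fden_succ, mul_comm]
      exact hcomp
lemma R1_mapsTo_Icc (C : ℕ → SmoothBivCopula) (k : ℕ) (v : Fin k → ℝ)
    (hv : ∀ i, v i ∈ Set.Ioo (0:ℝ) 1) :
    Set.MapsTo (R1 C k v) (Set.Icc (0:ℝ) 1) (Set.Icc (0:ℝ) 1) := by
  obtain ⟨h1, -, -, h0, hone, -⟩ := R_props C k v hv
  intro x hx
  rcases eq_or_lt_of_le hx.1 with h | h
  · rw [← h, h0]; exact Set.left_mem_Icc.2 zero_le_one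
  rcases eq_or_lt_of_le hx.2 with h' | h'
  · rw [h', hone]; exact Set.right_mem_Icc.2 zero_le_one
  · exact Set.Ioo_subset_Icc_self (h1 x ⟨h, h'⟩)

lemma fden_integral (C : ℕ → SmoothBivCopula) (n : ℕ) (u : Fin n → ℝ)
    (hu : ∀ i, u i ∈ Set.Ioo (0:ℝ) 1) :
    ∫ x in (0:ℝ)..1, fden C n u x = 1 := by
  obtain ⟨-, -, hcont, h0, h1v, hderiv⟩ := R_props C n u hu
  set Φ : ℝ → ℝ := fun x => ∏ j ∈ Finset.Icc 1 n,
    (C j).Dw (R2 C (j - 1) (seg u (n - j + 1) (j - 1)) (get u (n - j)))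
             (R1 C (j - 1) (seg u (n - j + 1) (j - 1)) x) with hΦ
  have hseg : ∀ j ∈ Finset.Icc 1 n, ∀ i, seg u (n - j + 1) (j - 1) i ∈ Set.Ioo (0:ℝ) 1 := by
    intro j hj
    simp only [Finset.mem_Icc] at hj
    exact seg_mem_Ioo u hu (by omega)
  have hA : ∀ j ∈ Finset.Icc 1 n,
      R2 C (j - 1) (seg u (n - j + 1) (j - 1)) (get u (n - j)) ∈ Set.Ioo (0:ℝ) 1 := by
    intro j hj
    have hj' := Finset.mem_Icc.1 hj
    have hg : get u (n - j) ∈ Set.Ioo (0:ℝ) 1 := by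
      rw [get_lt u (by omega)]; exact hu _
    exact (R_props C (j - 1) _ (hseg j hj)).2.1 _ hg
  have hfeq : ∀ x ∈ Set.Ioo (0:ℝ) 1, fden C n u x = Φ x := by
    intro x hx
    refine Finset.prod_congr rfl fun j hj => ?_
    have hy : R1 C (j - 1) (seg u (n - j + 1) (j - 1)) x ∈ Set.Ioo (0:ℝ) 1 :=
      (R_props C (j - 1) _ (hseg j hj)).1 x hx
    exact ((C j).Dw_eq_density ⟨hA j hj, hy⟩).symm
  have hΦcont : ContinuousOn Φ (Set.Icc (0:ℝ) 1) := by
    apply continuousOn_finset_prod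
    intro j hj
    have hRcont := (R_props C (j - 1) _ (hseg j hj)).2.2.1
    exact ((C j).Dw_continuousOn (Set.Ioo_subset_Icc_self (hA j hj))).comp hRcont
      (R1_mapsTo_Icc C (j - 1) _ (hseg j hj))
  have hΦint : IntervalIntegrable Φ volume 0 1 := by
    apply ContinuousOn.intervalIntegrable
    rwa [Set.uIcc_of_le zero_le_one]
  have hftc : ∫ x in (0:ℝ)..1, Φ x = R1 C n u 1 - R1 C n u 0 := by
    apply intervalIntegral.integral_eq_sub_of_hasDeriv_right_of_le zero_le_one hcont ?_ hΦint
    intro x hx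
    have h := (hderiv x hx).hasDerivWithinAt (s := Set.Ioi x)
    rwa [hfeq x hx] at h
  have hcongr : ∫ x in (0:ℝ)..1, fden C n u x = ∫ x in (0:ℝ)..1, Φ x := by
    apply intervalIntegral.integral_congr_ae
    have h1m : ∀ᵐ (x : ℝ) ∂volume, x ≠ 1 := by
      rw [MeasureTheory.ae_iff]
      have : {a : ℝ | ¬a ≠ 1} = {1} := by ext y; simp
      rw [this]
      exact Real.volume_singleton
    filter_upwards [h1m] with x hx1 hxI
    rw [Set.uIoc_of_le zero_le_one] at hxI
    exact hfeq x ⟨hxI.1, lt_of_le_of_ne hxI.2 hx1⟩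
  rw [hcongr, hftc, h1v, h0, sub_zero]

lemma double_prod_split (f : ℕ → ℕ → ℝ) (m : ℕ) :
    ∏ k ∈ Finset.Icc 1 (m + 1), ∏ j ∈ Finset.Icc (k + 1) (m + 1 + 1), f k j
      = (∏ k ∈ Finset.Icc 1 m, ∏ j ∈ Finset.Icc (k + 1) (m + 1), f k j)
        * ∏ k ∈ Finset.Icc 1 (m + 1), f k (m + 1 + 1) := by
  calc ∏ k ∈ Finset.Icc 1 (m + 1), ∏ j ∈ Finset.Icc (k + 1) (m + 1 + 1), f k j
      = ∏ k ∈ Finset.Icc 1 (m + 1),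
          ((∏ j ∈ Finset.Icc (k + 1) (m + 1), f k j) * f k (m + 1 + 1)) :=
        Finset.prod_congr rfl fun k hk =>
          Finset.prod_Icc_succ_top (by simp only [Finset.mem_Icc] at hk; omega) _
    _ = (∏ k ∈ Finset.Icc 1 (m + 1), ∏ j ∈ Finset.Icc (k + 1) (m + 1), f k j)
        * ∏ k ∈ Finset.Icc 1 (m + 1), f k (m + 1 + 1) := Finset.prod_mul_distrib
    _ = _ := by
        rw [Finset.prod_Icc_succ_top (by omega : 1 ≤ m + 1)
          (fun k => ∏ j ∈ Finset.Icc (k + 1) (m + 1), f k j),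
          Finset.Icc_eq_empty (by omega : ¬ m + 1 + 1 ≤ m + 1), Finset.prod_empty, mul_one]

lemma svine_snoc (C : ℕ → SmoothBivCopula) (m : ℕ) (u : Fin (m + 1) → ℝ) (x : ℝ) :
    svineDensity C (m + 1 + 1) (Fin.snoc u x)
      = svineDensity C (m + 1) u * fden C (m + 1) u x := by
  unfold svineDensity fden
  have e1 : m + 1 + 1 - 1 = m + 1 := rfl
  have e2 : m + 1 - 1 = m := rfl
  rw [e1, e2, double_prod_split]
  congr 1
  · refine Finset.prod_congr rfl fun k hk => Finset.prod_congr rfl fun j hj => ?_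
    simp only [Finset.mem_Icc] at hk hj
    have hseg : seg (Fin.snoc u x) (j - k) (k - 1) = seg u (j - k) (k - 1) := by
      funext i
      have hi := i.isLt
      show get (Fin.snoc u x) _ = get u _
      exact get_snoc_lt u x (by omega)
    have hg1 : get (Fin.snoc u x) (j - k - 1) = get u (j - k - 1) :=
      get_snoc_lt u x (by omega)
    have hg2 : get (Fin.snoc u x) (j - 1) = get u (j - 1) :=
      get_snoc_lt u x (by omega)
    rw [hseg, hg1, hg2]
  · refine Finset.prod_congr rfl fun k hk => ?_
    simp only [Finset.mem_Icc] at hk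
    have hseg : seg (Fin.snoc u x) (m + 1 + 1 - k) (k - 1) = seg u (m + 1 - k + 1) (k - 1) := by
      funext i
      have hi := i.isLt
      show get (Fin.snoc u x) _ = get u _
      rw [get_snoc_lt u x (by omega)]
      congr 1
      omega
    have hg1 : get (Fin.snoc u x) (m + 1 + 1 - k - 1) = get u (m + 1 - k) := by
      rw [get_snoc_lt u x (by omega)]
      congr 1
      omega
    have hg2 : get (Fin.snoc u x) (m + 1 + 1 - 1) = x := get_snoc_last u x
    rw [hseg, hg1, hg2]
/-- integrating out the last argument of the s-vine density of order `n+1`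
recovers the s-vine density of order `n`:
`∫_0^1 c_(n+1)(u₁,…,uₙ,x) dx = c_(n)(u₁,…,uₙ)` (with `c_(1) ≡ 1` by definition). -/
theorem svine_density_integrate_last
    (C : ℕ → SmoothBivCopula) :
    ∀ n, 1 ≤ n → ∀ u : Fin n → ℝ, (∀ i, u i ∈ Set.Ioo (0:ℝ) 1) →
      ∫ x in (0:ℝ)..1, svineDensity C (n + 1) (Fin.snoc u x) = svineDensity C n u := by
  intro n hn u hu
  obtain ⟨m, rfl⟩ : ∃ m, n = m + 1 := ⟨n - 1, by omega⟩
  simp only [svine_snoc]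
  rw [intervalIntegral.integral_const_mul, fden_integral C (m + 1) u hu, mul_one]

end
end

section
/- Let p ≥ 1 and let (C_k)_{k≥1} be a sequence of smooth bivariate copulas truncated at order p, i.e. C_k(u,v) = uv for all k > p. Then for every n > p and all (u_1,…,u_n) ∈ (0,1)^n, the s-vine density factorizes in Markov form: c_{(n)}(u_1,…,u_n) = c_{(p)}(u_1,…,u_p) ∏_{j=p+1}^{n} f_p((u_{j−p},…,u_{j−1}), u_j), where f_p is the forward Rosenblatt density of order p. -/
open MeasureTheory Set

noncomputable section

namespace SmoothBivCopula

-- interior square is a neighborhood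
lemma sq_mem_nhds {u v : ℝ} (hu : u ∈ Ioo (0:ℝ) 1) (hv : v ∈ Ioo (0:ℝ) 1) :
    (Icc (0:ℝ) 1 ×ˢ Icc (0:ℝ) 1 : Set (ℝ × ℝ)) ∈ nhds (u, v) := by
  have hsub : (Ioo (0:ℝ) 1 ×ˢ Ioo (0:ℝ) 1 : Set (ℝ × ℝ)) ⊆ Icc 0 1 ×ˢ Icc 0 1 :=
    Set.prod_mono Ioo_subset_Icc_self Ioo_subset_Icc_self
  exact Filter.mem_of_superset (((isOpen_Ioo).prod isOpen_Ioo).mem_nhds ⟨hu, hv⟩) hsub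

lemma contDiffAt (C : SmoothBivCopula) {u v : ℝ} (hu : u ∈ Ioo (0:ℝ) 1)
    (hv : v ∈ Ioo (0:ℝ) 1) :
    ContDiffAt ℝ (⊤ : ℕ∞) (fun p : ℝ × ℝ => C.toFun p.1 p.2) (u, v) :=
  C.smooth.contDiffAt (sq_mem_nhds hu hv)

lemma hasDerivAt_h1 (C : SmoothBivCopula) {u v : ℝ} (hu : u ∈ Ioo (0:ℝ) 1)
    (hv : v ∈ Ioo (0:ℝ) 1) :
    HasDerivAt (fun s => C.toFun s v)
      ((fderiv ℝ (fun p : ℝ × ℝ => C.toFun p.1 p.2) (u, v)) (1, 0)) u := by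
  have hd : HasFDerivAt (fun p : ℝ × ℝ => C.toFun p.1 p.2)
      (fderiv ℝ (fun p : ℝ × ℝ => C.toFun p.1 p.2) (u, v)) (u, v) :=
    ((C.contDiffAt hu hv).differentiableAt (by simp)).hasFDerivAt
  exact hd.comp_hasDerivAt u ((hasDerivAt_id u).prodMk (hasDerivAt_const u v))

lemma hasDerivAt_h2 (C : SmoothBivCopula) {u v : ℝ} (hu : u ∈ Ioo (0:ℝ) 1)
    (hv : v ∈ Ioo (0:ℝ) 1) :
    HasDerivAt (fun t => C.toFun u t)
      ((fderiv ℝ (fun p : ℝ × ℝ => C.toFun p.1 p.2) (u, v)) (0, 1)) v := by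
  have hd : HasFDerivAt (fun p : ℝ × ℝ => C.toFun p.1 p.2)
      (fderiv ℝ (fun p : ℝ × ℝ => C.toFun p.1 p.2) (u, v)) (u, v) :=
    ((C.contDiffAt hu hv).differentiableAt (by simp)).hasFDerivAt
  exact hd.comp_hasDerivAt v ((hasDerivAt_const v u).prodMk (hasDerivAt_id v))

lemma h1_eq_fderiv_s17 (C : SmoothBivCopula) {u v : ℝ} (hu : u ∈ Ioo (0:ℝ) 1)
    (hv : v ∈ Ioo (0:ℝ) 1) :
    C.h1 u v = (fderiv ℝ (fun p : ℝ × ℝ => C.toFun p.1 p.2) (u, v)) (1, 0) :=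
  (C.hasDerivAt_h1 hu hv).deriv

lemma h2_eq_fderiv_s17 (C : SmoothBivCopula) {u v : ℝ} (hu : u ∈ Ioo (0:ℝ) 1)
    (hv : v ∈ Ioo (0:ℝ) 1) :
    C.h2 u v = (fderiv ℝ (fun p : ℝ × ℝ => C.toFun p.1 p.2) (u, v)) (0, 1) :=
  (C.hasDerivAt_h2 hu hv).deriv

lemma h1_strictMonoOn_s17 (C : SmoothBivCopula) {u : ℝ} (hu : u ∈ Ioo (0:ℝ) 1) :
    StrictMonoOn (C.h1 u) (Ioo (0:ℝ) 1) := by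
  have hdiff : ∀ v ∈ Ioo (0:ℝ) 1, DifferentiableAt ℝ (C.h1 u) v := fun v hv =>
    differentiableAt_of_deriv_ne_zero (ne_of_gt (C.density_pos u hu v hv))
  refine strictMonoOn_of_deriv_pos (convex_Ioo 0 1)
    (fun v hv => ((hdiff v hv).continuousAt).continuousWithinAt) ?_
  rw [interior_Ioo]
  exact fun v hv => C.density_pos u hu v hv

end SmoothBivCopula
namespace SmoothBivCopula

lemma hasDerivAt_h2_fst_s17 (C : SmoothBivCopula) {u v : ℝ} (hu : u ∈ Ioo (0:ℝ) 1)
    (hv : v ∈ Ioo (0:ℝ) 1) :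
    HasDerivAt (fun s => C.h2 s v) (C.density u v) u := by
  set f : ℝ × ℝ → ℝ := fun p => C.toFun p.1 p.2 with hf
  set f'' := fderiv ℝ (fderiv ℝ f) (u, v) with hf''
  have hct : ContDiffAt ℝ (⊤ : ℕ∞) f (u, v) := C.contDiffAt hu hv
  have hfd : HasFDerivAt (fderiv ℝ f) f'' (u, v) := by
    have h1 : ContDiffAt ℝ 1 (fderiv ℝ f) (u, v) :=
      hct.fderiv_right (m := 1) (by exact WithTop.coe_le_coe.2 le_top)
    exact (h1.differentiableAt one_ne_zero).hasFDerivAt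
  -- derivative of s ↦ fderiv f (s, v) applied to a fixed vector
  have key : ∀ w : ℝ × ℝ,
      HasDerivAt (fun s => (fderiv ℝ f (s, v)) w) ((f'' (1, 0)) w) u := by
    intro w
    have hcurve : HasDerivAt (fun s : ℝ => ((s : ℝ), v)) ((1 : ℝ), (0 : ℝ)) u :=
      (hasDerivAt_id u).prodMk (hasDerivAt_const u v)
    have h3 : HasDerivAt (fun s => fderiv ℝ f (s, v)) (f'' (1, 0)) u :=
      hfd.comp_hasDerivAt u hcurve
    have h4 := h3.clm_apply (hasDerivAt_const u w)
    simpa using h4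
  have key2 : ∀ w : ℝ × ℝ,
      HasDerivAt (fun t => (fderiv ℝ f (u, t)) w) ((f'' (0, 1)) w) v := by
    intro w
    have hcurve : HasDerivAt (fun t : ℝ => (u, (t : ℝ))) ((0 : ℝ), (1 : ℝ)) v :=
      (hasDerivAt_const v u).prodMk (hasDerivAt_id v)
    have h3 : HasDerivAt (fun t => fderiv ℝ f (u, t)) (f'' (0, 1)) v :=
      hfd.comp_hasDerivAt v hcurve
    have h4 := h3.clm_apply (hasDerivAt_const v w)
    simpa using h4
  -- density equals f'' (0,1) (1,0)
  have hdens : C.density u v = (f'' (0, 1)) (1, 0) := by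
    have hee : (fun t => deriv (fun s => C.toFun s t) u) =ᶠ[nhds v]
        (fun t => (fderiv ℝ f (u, t)) (1, 0)) := by
      filter_upwards [isOpen_Ioo.mem_nhds hv] with t ht
      exact C.h1_eq_fderiv_s17 hu ht
    have := (key2 (1, 0)).deriv
    calc C.density u v = deriv (fun t => deriv (fun s => C.toFun s t) u) v := rfl
      _ = deriv (fun t => (fderiv ℝ f (u, t)) (1, 0)) v := hee.deriv_eq
      _ = (f'' (0, 1)) (1, 0) := this
  -- symmetry of second derivative
  have hsymm : (f'' (1, 0)) (0, 1) = (f'' (0, 1)) (1, 0) := by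
    have := hct.isSymmSndFDerivAt (n := ((⊤ : ℕ∞) : WithTop ℕ∞)) (by have : ((2:ℕ∞) : WithTop ℕ∞) ≤ ((⊤:ℕ∞) : WithTop ℕ∞) := WithTop.coe_le_coe.2 le_top; simpa using this)
    exact this (1, 0) (0, 1)
  have hmain : HasDerivAt (fun s => (fderiv ℝ f (s, v)) (0, 1)) (C.density u v) u := by
    rw [hdens, ← hsymm]; exact key (0, 1)
  refine hmain.congr_of_eventuallyEq ?_
  filter_upwards [isOpen_Ioo.mem_nhds hu] with s hs
  exact C.h2_eq_fderiv_s17 hs hv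

lemma h2_fst_strictMonoOn (C : SmoothBivCopula) {v : ℝ} (hv : v ∈ Ioo (0:ℝ) 1) :
    StrictMonoOn (fun s => C.h2 s v) (Ioo (0:ℝ) 1) := by
  refine strictMonoOn_of_deriv_pos (convex_Ioo 0 1)
    (fun s hs => ((C.hasDerivAt_h2_fst_s17 hs hv).differentiableAt.continuousAt).continuousWithinAt) ?_
  rw [interior_Ioo]
  intro s hs
  rw [(C.hasDerivAt_h2_fst_s17 hs hv).deriv]
  exact C.density_pos s hs v hv

end SmoothBivCopula
-- deriv of a function monotone on an open interval is nonneg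
lemma deriv_nonneg_of_monotoneOn {g : ℝ → ℝ} {a b u : ℝ} (hm : MonotoneOn g (Ioo a b))
    (hu : u ∈ Ioo a b) (hd : DifferentiableAt ℝ g u) : 0 ≤ deriv g u := by
  have h := hd.hasDerivAt
  rw [hasDerivAt_iff_tendsto_slope] at h
  have h2 : Filter.Tendsto (slope g u) (nhdsWithin u (Ioi u)) (nhds (deriv g u)) :=
    h.mono_left (nhdsWithin_mono u fun y hy => ne_of_gt hy)
  refine ge_of_tendsto h2 ?_
  have hmem : Ioo a b ∈ nhdsWithin u (Ioi u) :=
    nhdsWithin_le_nhds (isOpen_Ioo.mem_nhds hu)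
  filter_upwards [hmem, self_mem_nhdsWithin] with y hy hy'
  have : g u ≤ g y := hm hu hy (le_of_lt hy')
  have hpos : 0 < y - u := sub_pos.2 hy'
  rw [slope_def_field]
  exact div_nonneg (by linarith) (le_of_lt hpos)

namespace SmoothBivCopula

lemma cont_slice_fst (C : SmoothBivCopula) {s : ℝ} (hs : s ∈ Icc (0:ℝ) 1) :
    ContinuousOn (fun t => C.toFun s t) (Icc (0:ℝ) 1) := by
  have : ContinuousOn (fun p : ℝ × ℝ => C.toFun p.1 p.2) (Icc (0:ℝ) 1 ×ˢ Icc (0:ℝ) 1) :=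
    C.smooth.continuousOn
  exact this.comp (Continuous.continuousOn (by fun_prop))
    (fun t ht => Set.mk_mem_prod hs ht)

lemma cont_slice_snd (C : SmoothBivCopula) {t : ℝ} (ht : t ∈ Icc (0:ℝ) 1) :
    ContinuousOn (fun s => C.toFun s t) (Icc (0:ℝ) 1) := by
  have : ContinuousOn (fun p : ℝ × ℝ => C.toFun p.1 p.2) (Icc (0:ℝ) 1 ×ˢ Icc (0:ℝ) 1) :=
    C.smooth.continuousOn
  exact this.comp (Continuous.continuousOn (by fun_prop))
    (fun s hs => Set.mk_mem_prod hs ht)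

/-- rectangle difference monotone in first variable -/
lemma diff_strictMono_fst (C : SmoothBivCopula) {v1 v2 : ℝ} (h1 : v1 ∈ Ioo (0:ℝ) 1)
    (h2 : v2 ∈ Ioo (0:ℝ) 1) (h12 : v1 < v2) :
    StrictMonoOn (fun s => C.toFun s v2 - C.toFun s v1) (Ioo (0:ℝ) 1) := by
  refine strictMonoOn_of_deriv_pos (convex_Ioo 0 1) ?_ ?_
  · intro s hs
    exact (((C.hasDerivAt_h1 hs h2).sub (C.hasDerivAt_h1 hs h1)).differentiableAt.continuousAt).continuousWithinAt
  · rw [interior_Ioo]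
    intro s hs
    have hD := (C.hasDerivAt_h1 hs h2).sub (C.hasDerivAt_h1 hs h1)
    rw [show deriv (fun s => C.toFun s v2 - C.toFun s v1) s = _ from hD.deriv]
    have := C.h1_strictMonoOn_s17 hs h1 h2 h12
    rw [h1_eq_fderiv_s17 C hs h1, h1_eq_fderiv_s17 C hs h2] at this
    linarith

/-- rectangle difference monotone in second variable -/
lemma diff_strictMono_snd (C : SmoothBivCopula) {u1 u2 : ℝ} (h1 : u1 ∈ Ioo (0:ℝ) 1)
    (h2 : u2 ∈ Ioo (0:ℝ) 1) (h12 : u1 < u2) :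
    StrictMonoOn (fun t => C.toFun u2 t - C.toFun u1 t) (Ioo (0:ℝ) 1) := by
  refine strictMonoOn_of_deriv_pos (convex_Ioo 0 1) ?_ ?_
  · intro t ht
    exact (((C.hasDerivAt_h2 h2 ht).sub (C.hasDerivAt_h2 h1 ht)).differentiableAt.continuousAt).continuousWithinAt
  · rw [interior_Ioo]
    intro t ht
    have hD := (C.hasDerivAt_h2 h2 ht).sub (C.hasDerivAt_h2 h1 ht)
    rw [show deriv (fun t => C.toFun u2 t - C.toFun u1 t) t = _ from hD.deriv]
    have := C.h2_fst_strictMonoOn ht h1 h2 h12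
    simp only [h2_eq_fderiv_s17 C h1 ht, h2_eq_fderiv_s17 C h2 ht] at this
    linarith

end SmoothBivCopula
namespace SmoothBivCopula

lemma neBot_left {v : ℝ} (hv : 0 < v) : (nhdsWithin (0:ℝ) (Ioo 0 v)).NeBot := by
  rw [← mem_closure_iff_nhdsWithin_neBot, closure_Ioo (ne_of_lt hv)]
  exact ⟨le_rfl, le_of_lt hv⟩

lemma neBot_right {v : ℝ} (hv : v < 1) : (nhdsWithin (1:ℝ) (Ioo v 1)).NeBot := by
  rw [← mem_closure_iff_nhdsWithin_neBot, closure_Ioo (ne_of_lt hv)]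
  exact ⟨le_of_lt hv, le_rfl⟩

lemma mono_fst (C : SmoothBivCopula) {v : ℝ} (hv : v ∈ Ioo (0:ℝ) 1) :
    MonotoneOn (fun s => C.toFun s v) (Ioo (0:ℝ) 1) := by
  intro s1 hs1 s2 hs2 hle
  rcases eq_or_lt_of_le hle with rfl | h12
  · exact le_rfl
  have key : ∀ v1 ∈ Ioo (0:ℝ) v, C.toFun s1 v - C.toFun s2 v ≤ C.toFun s1 v1 - C.toFun s2 v1 := by
    intro v1 hv1
    have hv1' : v1 ∈ Ioo (0:ℝ) 1 := ⟨hv1.1, lt_trans hv1.2 hv.2⟩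
    have := (C.diff_strictMono_fst hv1' hv hv1.2) hs1 hs2 h12
    simp only at this
    linarith
  haveI := neBot_left hv.1
  have htend : Filter.Tendsto (fun v1 => C.toFun s1 v1 - C.toFun s2 v1)
      (nhdsWithin (0:ℝ) (Ioo 0 v)) (nhds (0:ℝ)) := by
    have hc1 : ContinuousWithinAt (fun t => C.toFun s1 t) (Icc (0:ℝ) 1) 0 :=
      (C.cont_slice_fst (Ioo_subset_Icc_self hs1)) 0 (by constructor <;> norm_num)
    have hc2 : ContinuousWithinAt (fun t => C.toFun s2 t) (Icc (0:ℝ) 1) 0 :=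
      (C.cont_slice_fst (Ioo_subset_Icc_self hs2)) 0 (by constructor <;> norm_num)
    have hsub : Ioo (0:ℝ) v ⊆ Icc 0 1 := fun x hx =>
      ⟨le_of_lt hx.1, le_of_lt (lt_trans hx.2 hv.2)⟩
    have := ((hc1.sub hc2).mono hsub).tendsto
    simp only [Pi.sub_apply] at this
    rwa [C.zero_right s1 (Ioo_subset_Icc_self hs1), C.zero_right s2 (Ioo_subset_Icc_self hs2),
      sub_self] at this
  have hfin : C.toFun s1 v - C.toFun s2 v ≤ 0 := by
    refine ge_of_tendsto htend ?_
    filter_upwards [self_mem_nhdsWithin] with v1 hv1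
    exact key v1 hv1
  dsimp only
  linarith

lemma mono_fst' (C : SmoothBivCopula) {v : ℝ} (hv : v ∈ Ioo (0:ℝ) 1) :
    MonotoneOn (fun s => s - C.toFun s v) (Ioo (0:ℝ) 1) := by
  intro s1 hs1 s2 hs2 hle
  rcases eq_or_lt_of_le hle with rfl | h12
  · exact le_rfl
  have key : ∀ v2 ∈ Ioo v 1, C.toFun s1 v2 - C.toFun s2 v2 ≤ C.toFun s1 v - C.toFun s2 v := by
    intro v2 hv2
    have hv2' : v2 ∈ Ioo (0:ℝ) 1 := ⟨lt_trans hv.1 hv2.1, hv2.2⟩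
    have := (C.diff_strictMono_fst hv hv2' hv2.1) hs1 hs2 h12
    simp only at this
    linarith
  haveI := neBot_right hv.2
  have htend : Filter.Tendsto (fun v2 => C.toFun s1 v2 - C.toFun s2 v2)
      (nhdsWithin (1:ℝ) (Ioo v 1)) (nhds (s1 - s2)) := by
    have hc1 : ContinuousWithinAt (fun t => C.toFun s1 t) (Icc (0:ℝ) 1) 1 :=
      (C.cont_slice_fst (Ioo_subset_Icc_self hs1)) 1 (by constructor <;> norm_num)
    have hc2 : ContinuousWithinAt (fun t => C.toFun s2 t) (Icc (0:ℝ) 1) 1 :=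
      (C.cont_slice_fst (Ioo_subset_Icc_self hs2)) 1 (by constructor <;> norm_num)
    have hsub : Ioo v 1 ⊆ Icc 0 1 := fun x hx =>
      ⟨le_of_lt (lt_trans hv.1 hx.1), le_of_lt hx.2⟩
    have := ((hc1.sub hc2).mono hsub).tendsto
    simp only [Pi.sub_apply] at this
    rwa [C.one_right s1 (Ioo_subset_Icc_self hs1), C.one_right s2 (Ioo_subset_Icc_self hs2)]
      at this
  have hfin : s1 - s2 ≤ C.toFun s1 v - C.toFun s2 v := by
    refine le_of_tendsto htend ?_
    filter_upwards [self_mem_nhdsWithin] with v2 hv2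
    exact key v2 hv2
  dsimp only
  linarith

lemma mono_snd (C : SmoothBivCopula) {u : ℝ} (hu : u ∈ Ioo (0:ℝ) 1) :
    MonotoneOn (fun t => C.toFun u t) (Ioo (0:ℝ) 1) := by
  intro t1 ht1 t2 ht2 hle
  rcases eq_or_lt_of_le hle with rfl | h12
  · exact le_rfl
  have key : ∀ u1 ∈ Ioo (0:ℝ) u, C.toFun u t1 - C.toFun u t2 ≤ C.toFun u1 t1 - C.toFun u1 t2 := by
    intro u1 hu1
    have hu1' : u1 ∈ Ioo (0:ℝ) 1 := ⟨hu1.1, lt_trans hu1.2 hu.2⟩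
    have := (C.diff_strictMono_snd hu1' hu hu1.2) ht1 ht2 h12
    simp only at this
    linarith
  haveI := neBot_left hu.1
  have htend : Filter.Tendsto (fun u1 => C.toFun u1 t1 - C.toFun u1 t2)
      (nhdsWithin (0:ℝ) (Ioo 0 u)) (nhds (0:ℝ)) := by
    have hc1 : ContinuousWithinAt (fun s => C.toFun s t1) (Icc (0:ℝ) 1) 0 :=
      (C.cont_slice_snd (Ioo_subset_Icc_self ht1)) 0 (by constructor <;> norm_num)
    have hc2 : ContinuousWithinAt (fun s => C.toFun s t2) (Icc (0:ℝ) 1) 0 :=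
      (C.cont_slice_snd (Ioo_subset_Icc_self ht2)) 0 (by constructor <;> norm_num)
    have hsub : Ioo (0:ℝ) u ⊆ Icc 0 1 := fun x hx =>
      ⟨le_of_lt hx.1, le_of_lt (lt_trans hx.2 hu.2)⟩
    have := ((hc1.sub hc2).mono hsub).tendsto
    simp only [Pi.sub_apply] at this
    rwa [C.zero_left t1 (Ioo_subset_Icc_self ht1), C.zero_left t2 (Ioo_subset_Icc_self ht2),
      sub_self] at this
  have hfin : C.toFun u t1 - C.toFun u t2 ≤ 0 := by
    refine ge_of_tendsto htend ?_
    filter_upwards [self_mem_nhdsWithin] with u1 hu1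
    exact key u1 hu1
  dsimp only
  linarith

lemma mono_snd' (C : SmoothBivCopula) {u : ℝ} (hu : u ∈ Ioo (0:ℝ) 1) :
    MonotoneOn (fun t => t - C.toFun u t) (Ioo (0:ℝ) 1) := by
  intro t1 ht1 t2 ht2 hle
  rcases eq_or_lt_of_le hle with rfl | h12
  · exact le_rfl
  have key : ∀ u2 ∈ Ioo u 1, C.toFun u2 t1 - C.toFun u2 t2 ≤ C.toFun u t1 - C.toFun u t2 := by
    intro u2 hu2
    have hu2' : u2 ∈ Ioo (0:ℝ) 1 := ⟨lt_trans hu.1 hu2.1, hu2.2⟩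
    have := (C.diff_strictMono_snd hu hu2' hu2.1) ht1 ht2 h12
    simp only at this
    linarith
  haveI := neBot_right hu.2
  have htend : Filter.Tendsto (fun u2 => C.toFun u2 t1 - C.toFun u2 t2)
      (nhdsWithin (1:ℝ) (Ioo u 1)) (nhds (t1 - t2)) := by
    have hc1 : ContinuousWithinAt (fun s => C.toFun s t1) (Icc (0:ℝ) 1) 1 :=
      (C.cont_slice_snd (Ioo_subset_Icc_self ht1)) 1 (by constructor <;> norm_num)
    have hc2 : ContinuousWithinAt (fun s => C.toFun s t2) (Icc (0:ℝ) 1) 1 :=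
      (C.cont_slice_snd (Ioo_subset_Icc_self ht2)) 1 (by constructor <;> norm_num)
    have hsub : Ioo u 1 ⊆ Icc 0 1 := fun x hx =>
      ⟨le_of_lt (lt_trans hu.1 hx.1), le_of_lt hx.2⟩
    have := ((hc1.sub hc2).mono hsub).tendsto
    simp only [Pi.sub_apply] at this
    rwa [C.one_left t1 (Ioo_subset_Icc_self ht1), C.one_left t2 (Ioo_subset_Icc_self ht2)]
      at this
  have hfin : t1 - t2 ≤ C.toFun u t1 - C.toFun u t2 := by
    refine le_of_tendsto htend ?_
    filter_upwards [self_mem_nhdsWithin] with u2 hu2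
    exact key u2 hu2
  dsimp only
  linarith

end SmoothBivCopula
namespace SmoothBivCopula

lemma h1_mem (C : SmoothBivCopula) {u v : ℝ} (hu : u ∈ Ioo (0:ℝ) 1) (hv : v ∈ Ioo (0:ℝ) 1) :
    C.h1 u v ∈ Ioo (0:ℝ) 1 := by
  obtain ⟨hv0, hv1⟩ := hv
  have ht : v / 2 ∈ Ioo (0:ℝ) 1 := ⟨by linarith, by linarith⟩
  have ht2 : (v + 1) / 2 ∈ Ioo (0:ℝ) 1 := ⟨by linarith, by linarith⟩
  constructor
  · have h0 : 0 ≤ C.h1 u (v / 2) :=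
      deriv_nonneg_of_monotoneOn (C.mono_fst ht) hu (C.hasDerivAt_h1 hu ht).differentiableAt
    have := C.h1_strictMonoOn_s17 hu ht ⟨hv0, hv1⟩ (by linarith)
    linarith
  · have h0 : 0 ≤ 1 - C.h1 u ((v + 1) / 2) := by
      have hD := (hasDerivAt_id' (x := u)).sub (C.hasDerivAt_h1 hu ht2)
      have := deriv_nonneg_of_monotoneOn (C.mono_fst' ht2) hu hD.differentiableAt
      rw [show deriv (fun s => s - C.toFun s ((v + 1) / 2)) u = _ from hD.deriv] at this
      have heq : C.h1 u ((v + 1) / 2) =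
          (fderiv ℝ (fun p : ℝ × ℝ => C.toFun p.1 p.2) (u, (v + 1) / 2)) (1, 0) :=
        C.h1_eq_fderiv_s17 hu ht2
      linarith [heq ▸ this]
    have := C.h1_strictMonoOn_s17 hu ⟨hv0, hv1⟩ ht2 (by linarith)
    linarith

lemma h2_mem (C : SmoothBivCopula) {u v : ℝ} (hu : u ∈ Ioo (0:ℝ) 1) (hv : v ∈ Ioo (0:ℝ) 1) :
    C.h2 u v ∈ Ioo (0:ℝ) 1 := by
  obtain ⟨hu0, hu1⟩ := hu
  have hs : u / 2 ∈ Ioo (0:ℝ) 1 := ⟨by linarith, by linarith⟩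
  have hs2 : (u + 1) / 2 ∈ Ioo (0:ℝ) 1 := ⟨by linarith, by linarith⟩
  constructor
  · have h0 : 0 ≤ C.h2 (u / 2) v :=
      deriv_nonneg_of_monotoneOn (C.mono_snd hs) hv (C.hasDerivAt_h2 hs hv).differentiableAt
    have := C.h2_fst_strictMonoOn hv hs ⟨hu0, hu1⟩ (by linarith)
    dsimp only at this
    linarith
  · have h0 : 0 ≤ 1 - C.h2 ((u + 1) / 2) v := by
      have hD := (hasDerivAt_id' (x := v)).sub (C.hasDerivAt_h2 hs2 hv)
      have := deriv_nonneg_of_monotoneOn (C.mono_snd' hs2) hv hD.differentiableAt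
      rw [show deriv (fun t => t - C.toFun ((u + 1) / 2) t) v = _ from hD.deriv] at this
      have heq : C.h2 ((u + 1) / 2) v =
          (fderiv ℝ (fun p : ℝ × ℝ => C.toFun p.1 p.2) ((u + 1) / 2, v)) (0, 1) :=
        C.h2_eq_fderiv_s17 hs2 hv
      linarith [heq ▸ this]
    have := C.h2_fst_strictMonoOn hv ⟨hu0, hu1⟩ hs2 (by linarith)
    dsimp only at this
    linarith

end SmoothBivCopula

-- Rosenblatt functions stay in (0,1)
lemma rosenblatt_mem (C : ℕ → SmoothBivCopula) :
    ∀ k (u : Fin k → ℝ), (∀ i, u i ∈ Ioo (0:ℝ) 1) → ∀ x ∈ Ioo (0:ℝ) 1,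
      R1 C k u x ∈ Ioo (0:ℝ) 1 ∧ R2 C k u x ∈ Ioo (0:ℝ) 1 := by
  intro k
  induction k with
  | zero => intro u hu x hx; exact ⟨hx, hx⟩
  | succ k ih =>
    intro u hu x hx
    have htail : ∀ i, Fin.tail u i ∈ Ioo (0:ℝ) 1 := fun i => hu _
    have hinit : ∀ i, Fin.init u i ∈ Ioo (0:ℝ) 1 := fun i => hu _
    constructor
    · show (C (k+1)).h1 (R2 C k (Fin.tail u) (u 0)) (R1 C k (Fin.tail u) x) ∈ Ioo (0:ℝ) 1
      exact (C (k+1)).h1_mem ((ih (Fin.tail u) htail (u 0) (hu 0)).2)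
        ((ih (Fin.tail u) htail x hx).1)
    · show (C (k+1)).h2 (R2 C k (Fin.init u) x) (R1 C k (Fin.init u) (u (Fin.last k))) ∈ Ioo (0:ℝ) 1
      exact (C (k+1)).h2_mem ((ih (Fin.init u) hinit x hx).2)
        ((ih (Fin.init u) hinit (u (Fin.last k)) (hu _)).1)

-- density of an independence copula is 1 on the interior
lemma density_eq_one_of_indep (C : SmoothBivCopula)
    (h : ∀ u ∈ Icc (0:ℝ) 1, ∀ v ∈ Icc (0:ℝ) 1, C.toFun u v = u * v)
    {u v : ℝ} (hu : u ∈ Ioo (0:ℝ) 1) (hv : v ∈ Ioo (0:ℝ) 1) : C.density u v = 1 := by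
  have hinner : ∀ t ∈ Ioo (0:ℝ) 1, deriv (fun s => C.toFun s t) u = t := by
    intro t ht
    have hee : (fun s => C.toFun s t) =ᶠ[nhds u] (fun s => s * t) := by
      filter_upwards [isOpen_Ioo.mem_nhds hu] with s hs
      exact h s (Ioo_subset_Icc_self hs) t (Ioo_subset_Icc_self ht)
    rw [hee.deriv_eq]
    simp
  have hee2 : (fun t => deriv (fun s => C.toFun s t) u) =ᶠ[nhds v] (fun t => t) := by
    filter_upwards [isOpen_Ioo.mem_nhds hv] with t ht
    exact hinner t ht
  show deriv (fun t => deriv (fun s => C.toFun s t) u) v = 1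
  rw [hee2.deriv_eq, deriv_id'']
lemma get_mem {n : ℕ} (u : Fin n → ℝ) (hu : ∀ i, u i ∈ Ioo (0:ℝ) 1) {m : ℕ} (hm : m < n) :
    get u m ∈ Ioo (0:ℝ) 1 := by
  unfold _root_.get; rw [dif_pos hm]; exact hu _

lemma get_seg {n : ℕ} (u : Fin n → ℝ) (a len m : ℕ) (hm : m < len) :
    get (seg u a len) m = get u (a + m) := by
  unfold _root_.get; rw [dif_pos hm]; rfl

lemma seg_mem {n : ℕ} (u : Fin n → ℝ) (hu : ∀ i, u i ∈ Ioo (0:ℝ) 1) {a len : ℕ}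
    (h : a + len ≤ n) : ∀ i : Fin len, seg u a len i ∈ Ioo (0:ℝ) 1 := by
  intro i
  show get u (a + i) ∈ Ioo (0:ℝ) 1
  exact get_mem u hu (by have := i.isLt; omega)

lemma seg_seg {n : ℕ} (u : Fin n → ℝ) (a len b len2 : ℕ) (h : b + len2 ≤ len) :
    seg (seg u a len) b len2 = seg u (a + b) len2 := by
  funext i
  show get (seg u a len) (b + i) = get u (a + b + i)
  rw [get_seg u a len (b + i) (by have := i.isLt; omega), Nat.add_assoc]

lemma Icc_one_eq_Ioc (m : ℕ) : Finset.Icc 1 m = Finset.Ioc 0 m := by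
  ext x; simp [Finset.mem_Icc, Finset.mem_Ioc]; omega

lemma Icc_succ_eq_Ioc (k m : ℕ) : Finset.Icc (k + 1) m = Finset.Ioc k m := by
  ext x; simp [Finset.mem_Icc, Finset.mem_Ioc]

lemma Ioc_pred_self {p : ℕ} (hp : 1 ≤ p) : Finset.Ioc (p - 1) p = {p} := by
  ext x; simp [Finset.mem_Ioc]; omega

/-- if the copula sequence is truncated at order `p` (i.e. `C_k(u,v) = uv`
for `k > p`), then for every `n > p` the s-vine density factorizes in Markov form:
`c_(n)(u₁,…,uₙ) = c_(p)(u₁,…,u_p) ∏_{j=p+1}^n f_p((u_{j−p},…,u_{j−1}), u_j)`. -/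
theorem svine_density_markov_factorization
    (C : ℕ → SmoothBivCopula) (p : ℕ) (hp : 1 ≤ p)
    (htrunc : ∀ k, p < k → ∀ u ∈ Set.Icc (0:ℝ) 1, ∀ v ∈ Set.Icc (0:ℝ) 1,
      (C k).toFun u v = u * v) :
    ∀ n, ∀ hn : p < n, ∀ u : Fin n → ℝ, (∀ i, u i ∈ Set.Ioo (0:ℝ) 1) →
      svineDensity C n u =
        svineDensity C p (fun i : Fin p => u ⟨(i : ℕ), by have := i.isLt; omega⟩) *
          ∏ j ∈ Finset.Icc (p + 1) n, fden C p (seg u (j - p - 1) p) (get u (j - 1)) := by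
  intro n hn u hu
  set u' : Fin p → ℝ := (fun i : Fin p => u ⟨(i : ℕ), by have := i.isLt; omega⟩) with hu'
  have hget' : ∀ m, m < p → get u' m = get u m := by
    intro m hm
    unfold _root_.get
    rw [dif_pos hm, dif_pos (show m < n by omega)]
  have hseg' : ∀ a len, a + len ≤ p → seg u' a len = seg u a len := by
    intro a len h
    funext i
    show get u' (a + i) = get u (a + i)
    exact hget' _ (by have := i.isLt; omega)
  set T : ℕ → ℕ → ℝ := fun k j =>
    (C k).density (R2 C (k - 1) (seg u (j - k) (k - 1)) (get u (j - k - 1)))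
                  (R1 C (k - 1) (seg u (j - k) (k - 1)) (get u (j - 1))) with hT
  have hLHS : svineDensity C n u = ∏ k ∈ Finset.Ioc 0 (n - 1), ∏ j ∈ Finset.Ioc k n, T k j := by
    rw [svineDensity, Icc_one_eq_Ioc]
    refine Finset.prod_congr rfl fun k _ => ?_
    rw [Icc_succ_eq_Ioc]
  -- terms with k > p are 1
  have htriv : ∀ k ∈ Finset.Ioc p (n - 1), (∏ j ∈ Finset.Ioc k n, T k j) = 1 := by
    intro k hk
    rw [Finset.mem_Ioc] at hk
    refine Finset.prod_eq_one fun j hj => ?_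
    rw [Finset.mem_Ioc] at hj
    have hsegmem : ∀ i : Fin (k - 1), seg u (j - k) (k - 1) i ∈ Ioo (0:ℝ) 1 :=
      seg_mem u hu (by omega)
    have hros := rosenblatt_mem C (k - 1) (seg u (j - k) (k - 1)) hsegmem
    exact density_eq_one_of_indep (C k) (htrunc k (by omega))
      ((hros _ (get_mem u hu (show j - k - 1 < n by omega))).2)
      ((hros _ (get_mem u hu (show j - 1 < n by omega))).1)
  have hsplit1 : (∏ k ∈ Finset.Ioc 0 (n - 1), ∏ j ∈ Finset.Ioc k n, T k j)
      = ∏ k ∈ Finset.Ioc 0 p, ∏ j ∈ Finset.Ioc k n, T k j := by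
    rw [← Finset.prod_Ioc_consecutive _ (show 0 ≤ p by omega) (show p ≤ n - 1 by omega),
      Finset.prod_congr rfl htriv, Finset.prod_const_one, mul_one]
  have hsplit2 : (∏ k ∈ Finset.Ioc 0 p, ∏ j ∈ Finset.Ioc k n, T k j)
      = (∏ k ∈ Finset.Ioc 0 p, ∏ j ∈ Finset.Ioc k p, T k j)
        * ∏ k ∈ Finset.Ioc 0 p, ∏ j ∈ Finset.Ioc p n, T k j := by
    rw [← Finset.prod_mul_distrib]
    refine Finset.prod_congr rfl fun k hk => ?_
    rw [Finset.mem_Ioc] at hk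
    exact (Finset.prod_Ioc_consecutive _ (show k ≤ p by omega) (show p ≤ n by omega)).symm
  -- first factor is svineDensity C p u'
  have hfac1 : (∏ k ∈ Finset.Ioc 0 p, ∏ j ∈ Finset.Ioc k p, T k j) = svineDensity C p u' := by
    rw [← Finset.prod_Ioc_consecutive _ (show 0 ≤ p - 1 by omega) (show p - 1 ≤ p by omega),
      Ioc_pred_self hp, Finset.prod_singleton, Finset.Ioc_self, Finset.prod_empty, mul_one]
    rw [svineDensity, Icc_one_eq_Ioc]
    refine Finset.prod_congr rfl fun k hk => ?_
    rw [Finset.mem_Ioc] at hk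
    rw [Icc_succ_eq_Ioc]
    refine Finset.prod_congr rfl fun j hj => ?_
    rw [Finset.mem_Ioc] at hj
    rw [hT]
    dsimp only
    rw [hseg' (j - k) (k - 1) (by omega), hget' (j - k - 1) (by omega),
      hget' (j - 1) (by omega)]
  -- second factor is the product of forward Rosenblatt densities
  have hfac2 : (∏ k ∈ Finset.Ioc 0 p, ∏ j ∈ Finset.Ioc p n, T k j)
      = ∏ j ∈ Finset.Ioc p n, fden C p (seg u (j - p - 1) p) (get u (j - 1)) := by
    rw [Finset.prod_comm]
    refine Finset.prod_congr rfl fun j hj => ?_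
    rw [Finset.mem_Ioc] at hj
    rw [fden, Icc_one_eq_Ioc]
    refine Finset.prod_congr rfl fun k hk => ?_
    rw [Finset.mem_Ioc] at hk
    rw [hT]
    dsimp only
    rw [seg_seg u (j - p - 1) p (p - k + 1) (k - 1) (by omega),
      get_seg u (j - p - 1) p (p - k) (by omega),
      show j - p - 1 + (p - k + 1) = j - k by omega,
      show j - p - 1 + (p - k) = j - k - 1 by omega]
  rw [hLHS, hsplit1, hsplit2, hfac1, hfac2, Icc_succ_eq_Ioc]


end
end
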